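/- arXiv:quant-ph/0306167 — 6 statements merged into one kernel-verified Lean document; each statement's English description precedes it below -/
import Mathlib

section
/- A 3×3 complex Hermitian matrix S = [S_{kj}] is positive semidefinite if and only if S11, S22, S33 ≥ 0 and there exist complex numbers g12, g23, g13, each of modulus at most 1, such that S12 = √S11 · g12 · √S22, S23 = √S22 · g23 · √S33, and S13 = √S11 · (g12·g23 + √(1−|g12|²) · g13 · √(1−|g23|²)) · √S33. -/
/-!
For `S ⪰ 0`, the 2 × 2 principal minors give `|S_jk|² ≤ S_jj S_kk`, which yields `g12` and `g23`.
For `g13`, the Desnanot–Jacobi identity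
`S₁₁ · det S = (S₀₀S₁₁ - |S₀₁|²)(S₁₁S₂₂ - |S₁₂|²) - |S₀₂S₁₁ - S₀₁S₁₂|²` together with `det S ≥ 0`
bounds `S₀₂ - √S₀₀ g12 g23 √S₂₂` (when `S₁₁ > 0`; otherwise `S₀₁ = S₁₂ = 0`) by `√S₀₀ √(1-|g12|²) √(1-|g23|²) √S₂₂`.

Conversely, `S = D M D` with `D = diag(√S_jj)` and `M` the correlation matrix of the `g`'s, and `M` is the
Gram matrix of the vectors that Gram–Schmidt produces from the parameters.
-/

open ComplexOrder Complex ComplexConjugate Matrix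

theorem Complex.exists_eq_sqrt_mul_mul_sqrt {z : ℂ} {x y : ℝ} (hx : 0 ≤ x)
    (h : normSq z ≤ x * y) : ∃ g : ℂ, ‖g‖ ≤ 1 ∧ z = (√x : ℂ) * g * (√y : ℂ) := by
  have hz : ‖z‖ ≤ √x * √y := by
    rw [← Real.sqrt_mul hx, norm_def]
    exact Real.sqrt_le_sqrt h
  rcases (mul_nonneg (Real.sqrt_nonneg x) (Real.sqrt_nonneg y)).eq_or_lt with hxy | hxy
  · refine ⟨0, by simp, ?_⟩
    rw [← hxy, norm_le_zero_iff] at hz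
    simp [hz]
  · refine ⟨z / (√x * √y : ℝ), ?_, ?_⟩
    · rw [norm_div, norm_real, Real.norm_of_nonneg hxy.le]
      exact div_le_one_of_le₀ hz hxy.le
    · have : ((√x * √y : ℝ) : ℂ) ≠ 0 := ofReal_ne_zero.mpr hxy.ne'
      push_cast at this ⊢
      rw [mul_comm _ (z / _), mul_assoc, div_mul_cancel₀ z this]

theorem Complex.normSq_sqrt_mul_mul_sqrt {x y : ℝ} (hx : 0 ≤ x) (hy : 0 ≤ y) (g : ℂ) :
    normSq ((√x : ℂ) * g * (√y : ℂ)) = x * ‖g‖ ^ 2 * y := by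
  simp only [normSq_mul, normSq_ofReal, Real.mul_self_sqrt hx, Real.mul_self_sqrt hy, Complex.sq_norm]

theorem Complex.mul_conj_add_sqrt_one_sub_sq {g : ℂ} (hg : ‖g‖ ≤ 1) :
    g * conj g + (√(1 - ‖g‖ ^ 2) : ℂ) ^ 2 = 1 := by
  have : 0 ≤ 1 - ‖g‖ ^ 2 := by nlinarith [norm_nonneg g]
  rw [mul_conj, ← ofReal_pow, Real.sq_sqrt this, ← Complex.sq_norm]
  push_cast
  ring

theorem Matrix.apply_one_one_mul_det_fin_three {R : Type*} [CommRing R] (M : Matrix (Fin 3) (Fin 3) R) :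
    M 1 1 * M.det = (M 0 0 * M 1 1 - M 0 1 * M 1 0) * (M 1 1 * M 2 2 - M 1 2 * M 2 1) -
      (M 0 2 * M 1 1 - M 0 1 * M 1 2) * (M 2 0 * M 1 1 - M 1 0 * M 2 1) := by
  rw [det_fin_three]
  ring

theorem Matrix.IsHermitian.ofReal_re_apply_self {n : Type*} {S : Matrix n n ℂ} (hS : S.IsHermitian)
    (i : n) : ((S i i).re : ℂ) = S i i :=
  conj_eq_iff_re.mp (hS.apply i i)

theorem Matrix.PosSemidef.normSq_apply_le {n : Type*} [Fintype n] [DecidableEq n] {S : Matrix n n ℂ}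
    (hS : S.PosSemidef) (i j : n) : normSq (S i j) ≤ (S i i).re * (S j j).re := by
  have hdet : (S.submatrix ![i, j] ![i, j]).det = ((S i i).re * (S j j).re - normSq (S i j) : ℝ) := by
    rw [det_fin_two]
    simp only [submatrix_apply, cons_val_zero, cons_val_one, cons_val_fin_one]
    rw [← hS.isHermitian.apply j i, ← hS.isHermitian.ofReal_re_apply_self i,
      ← hS.isHermitian.ofReal_re_apply_self j]
    push_cast
    rw [← mul_conj]
    simp
  have h0 := (hS.submatrix ![i, j]).det_nonneg
  rw [hdet, zero_le_real] at h0
  linarith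

theorem Matrix.PosSemidef.normSq_schur_fin_three_le {S : Matrix (Fin 3) (Fin 3) ℂ} (hS : S.PosSemidef) :
    normSq (S 0 2 * (S 1 1).re - S 0 1 * S 1 2) ≤
      ((S 0 0).re * (S 1 1).re - normSq (S 0 1)) * ((S 1 1).re * (S 2 2).re - normSq (S 1 2)) := by
  have hS' := hS.isHermitian
  have hdet : S 1 1 * S.det =
      (((S 0 0).re * (S 1 1).re - normSq (S 0 1)) * ((S 1 1).re * (S 2 2).re - normSq (S 1 2))
        - normSq (S 0 2 * (S 1 1).re - S 0 1 * S 1 2) : ℝ) := by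
    conv_lhs =>
      rw [apply_one_one_mul_det_fin_three, ← hS'.apply 1 0, ← hS'.apply 2 0, ← hS'.apply 2 1,
        ← hS'.ofReal_re_apply_self 0, ← hS'.ofReal_re_apply_self 1, ← hS'.ofReal_re_apply_self 2]
    push_cast
    simp only [← mul_conj, map_sub, map_mul, conj_ofReal, star_def]
  have h0 : 0 ≤ S 1 1 * S.det := mul_nonneg hS.diag_nonneg hS.det_nonneg
  rw [hdet, zero_le_real] at h0
  linarith

/-- The `(0, 2)` entry of the normalized matrix `D⁻¹ S D⁻¹`, `D = diag(√S_jj)`, in terms of the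
parameters. -/
noncomputable def cornerEntry (g12 g23 g13 : ℂ) : ℂ :=
  g12 * g23 + (√(1 - ‖g12‖ ^ 2) : ℂ) * g13 * (√(1 - ‖g23‖ ^ 2) : ℂ)

noncomputable def correlationMatrix (g12 g23 g13 : ℂ) : Matrix (Fin 3) (Fin 3) ℂ :=
  !![1, g12, cornerEntry g12 g23 g13;
    conj g12, 1, g23;
    conj (cornerEntry g12 g23 g13), conj g23, 1]

theorem exists_contractions_of_normSq_le {A B C : ℝ} {p q s : ℂ} (hA : 0 ≤ A) (hB : 0 ≤ B)
    (hC : 0 ≤ C) (hp : normSq p ≤ A * B) (hq : normSq q ≤ B * C) (hs : normSq s ≤ A * C)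
    (hschur : normSq (s * B - p * q) ≤ (A * B - normSq p) * (B * C - normSq q)) :
    ∃ g12 g23 g13 : ℂ, ‖g12‖ ≤ 1 ∧ ‖g23‖ ≤ 1 ∧ ‖g13‖ ≤ 1 ∧
      p = (√A : ℂ) * g12 * (√B : ℂ) ∧ q = (√B : ℂ) * g23 * (√C : ℂ) ∧
      s = (√A : ℂ) * cornerEntry g12 g23 g13 * (√C : ℂ) := by
  rcases hB.eq_or_lt with rfl | hBpos
  · rw [mul_zero] at hp
    rw [zero_mul] at hq
    have hp0 := normSq_eq_zero.mp (le_antisymm hp (normSq_nonneg p))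
    have hq0 := normSq_eq_zero.mp (le_antisymm hq (normSq_nonneg q))
    obtain ⟨g13, h13, rfl⟩ := exists_eq_sqrt_mul_mul_sqrt hA hs
    exact ⟨0, 0, g13, by simp, by simp, h13, by simp [hp0], by simp [hq0], by simp [cornerEntry]⟩
  obtain ⟨g12, h12, rfl⟩ := exists_eq_sqrt_mul_mul_sqrt hA hp
  obtain ⟨g23, h23, rfl⟩ := exists_eq_sqrt_mul_mul_sqrt hB hq
  set w := s - (√A : ℂ) * (g12 * g23) * (√C : ℂ)
  have hw : normSq w ≤ (A * (1 - ‖g12‖ ^ 2)) * ((1 - ‖g23‖ ^ 2) * C) := by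
    have hBB : (√B : ℂ) * (√B : ℂ) = B := by exact_mod_cast Real.mul_self_sqrt hB
    have hsw : s * B - (√A : ℂ) * g12 * (√B : ℂ) * ((√B : ℂ) * g23 * (√C : ℂ)) = (B : ℂ) * w := by
      linear_combination (-(√A : ℂ) * g12 * g23 * (√C : ℂ)) * hBB
    rw [hsw, normSq_mul, normSq_ofReal, normSq_sqrt_mul_mul_sqrt hA hB,
      normSq_sqrt_mul_mul_sqrt hB hC] at hschur
    refine le_of_mul_le_mul_left (a := B * B) ?_ (by positivity)
    linarith
  have h1 : 0 ≤ 1 - ‖g12‖ ^ 2 := by nlinarith [norm_nonneg g12]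
  obtain ⟨g13, h13, hg13⟩ := exists_eq_sqrt_mul_mul_sqrt (mul_nonneg hA h1) hw
  refine ⟨g12, g23, g13, h12, h23, h13, rfl, rfl, ?_⟩
  rw [Real.sqrt_mul hA, Real.sqrt_mul' _ hC] at hg13
  push_cast at hg13
  rw [cornerEntry]
  linear_combination hg13

theorem posSemidef_correlationMatrix {g12 g23 g13 : ℂ} (h12 : ‖g12‖ ≤ 1) (h23 : ‖g23‖ ≤ 1)
    (h13 : ‖g13‖ ≤ 1) : (correlationMatrix g12 g23 g13).PosSemidef := by
  set r12 : ℂ := ((√(1 - ‖g12‖ ^ 2) : ℝ) : ℂ)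
  set r23 : ℂ := ((√(1 - ‖g23‖ ^ 2) : ℝ) : ℂ)
  set r13 : ℂ := ((√(1 - ‖g13‖ ^ 2) : ℝ) : ℂ)
  have e12 := mul_conj_add_sqrt_one_sub_sq h12
  have e23 := mul_conj_add_sqrt_one_sub_sq h23
  have e13 := mul_conj_add_sqrt_one_sub_sq h13
  have hr12 : conj r12 = r12 := conj_ofReal _
  have hr23 : conj r23 = r23 := conj_ofReal _
  have hr13 : conj r13 = r13 := conj_ofReal _
  have hx : cornerEntry g12 g23 g13 = g12 * g23 + r12 * g13 * r23 := rfl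
  /- The columns are `v₀ = e₀`, `v₁ = g12 v₀ + r12 e₁` and
  `v₂ = g23 v₁ + r23 (g13 u + r13 e₂)`, where `u = r12 e₀ - conj g12 e₁` is the unit vector of
  `span {e₀, e₁}` orthogonal to `v₁`. -/
  let G : Matrix (Fin 3) (Fin 3) ℂ :=
    !![1, g12, cornerEntry g12 g23 g13;
      0, r12, r12 * g23 - conj g12 * g13 * r23;
      0, 0, r23 * r13]
  have hG : correlationMatrix g12 g23 g13 = Gᴴ * G := by
    ext i j
    fin_cases i <;> fin_cases j <;>
      simp only [G, correlationMatrix, hx, mul_apply, conjTranspose_apply, Fin.sum_univ_three, of_apply,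
        cons_val', cons_val, cons_val_zero, cons_val_one, cons_val_fin_one, Fin.isValue, Fin.zero_eta,
        Fin.mk_one, Fin.reduceFinMk, RCLike.star_def, map_add, map_sub, map_mul, map_one, map_zero,
        RingHomCompTriple.comp_apply, RingHom.id_apply, hr12, hr23, hr13, mul_one, one_mul, mul_zero,
        zero_mul, add_zero]
    · linear_combination -e12
    · linear_combination (-g23) * e12
    · linear_combination (-conj g23) * e12
    · linear_combination (-(g23 * conj g23 + r23 ^ 2 * g13 * conj g13)) * e12 - r23 ^ 2 * e13 - e23
  rw [hG]
  exact posSemidef_conjTranspose_mul_self G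

theorem Matrix.IsHermitian.posSemidef_of_eq_correlation {S : Matrix (Fin 3) (Fin 3) ℂ}
    (hS : S.IsHermitian) (hdiag : ∀ i, 0 ≤ (S i i).re) {g12 g23 g13 : ℂ} (h12 : ‖g12‖ ≤ 1)
    (h23 : ‖g23‖ ≤ 1) (h13 : ‖g13‖ ≤ 1)
    (e01 : S 0 1 = (√(S 0 0).re : ℂ) * g12 * (√(S 1 1).re : ℂ))
    (e12 : S 1 2 = (√(S 1 1).re : ℂ) * g23 * (√(S 2 2).re : ℂ))
    (e02 : S 0 2 = (√(S 0 0).re : ℂ) * cornerEntry g12 g23 g13 * (√(S 2 2).re : ℂ)) :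
    S.PosSemidef := by
  let D : Matrix (Fin 3) (Fin 3) ℂ := diagonal fun i ↦ (√(S i i).re : ℂ)
  have hsq : ∀ i, (√(S i i).re : ℂ) * (√(S i i).re : ℂ) = S i i := fun i ↦ by
    rw [← ofReal_mul, Real.mul_self_sqrt (hdiag i), hS.ofReal_re_apply_self]
  have hlower : ∀ i j, S j i = conj (S i j) := fun i j ↦ (hS.apply j i).symm
  have hS_eq : S = Dᴴ * correlationMatrix g12 g23 g13 * D := by
    ext i j
    rw [mul_diagonal, diagonal_conjTranspose, diagonal_mul]
    fin_cases i <;> fin_cases j <;>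
      simp only [correlationMatrix, Pi.star_apply, RCLike.star_def, conj_ofReal, of_apply, cons_val',
        cons_val, cons_val_zero, cons_val_one, cons_val_fin_one, Fin.isValue, Fin.zero_eta, Fin.mk_one,
        Fin.reduceFinMk, mul_one]
    · exact (hsq 0).symm
    · exact e01
    · exact e02
    · rw [hlower, e01]; simp only [map_mul, conj_ofReal]; ring
    · exact (hsq 1).symm
    · exact e12
    · rw [hlower, e02]; simp only [map_mul, conj_ofReal]; ring
    · rw [hlower, e12]; simp only [map_mul, conj_ofReal]; ring
    · exact (hsq 2).symm
  rw [hS_eq]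
  exact (posSemidef_correlationMatrix h12 h23 h13).conjTranspose_mul_mul_same D

/-- the d = 3 scalar case of the parametrization of positive matrices. -/
theorem stmt_1 (S : Matrix (Fin 3) (Fin 3) ℂ) (hS : S.IsHermitian) :
    S.PosSemidef ↔
      0 ≤ (S 0 0).re ∧ 0 ≤ (S 1 1).re ∧ 0 ≤ (S 2 2).re ∧
        ∃ g12 g23 g13 : ℂ, ‖g12‖ ≤ 1 ∧ ‖g23‖ ≤ 1 ∧ ‖g13‖ ≤ 1 ∧
          S 0 1 = (Real.sqrt (S 0 0).re : ℂ) * g12 * (Real.sqrt (S 1 1).re : ℂ) ∧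
          S 1 2 = (Real.sqrt (S 1 1).re : ℂ) * g23 * (Real.sqrt (S 2 2).re : ℂ) ∧
          S 0 2 = (Real.sqrt (S 0 0).re : ℂ) *
              (g12 * g23 +
                (Real.sqrt (1 - ‖g12‖ ^ 2) : ℂ) * g13 * (Real.sqrt (1 - ‖g23‖ ^ 2) : ℂ)) *
              (Real.sqrt (S 2 2).re : ℂ) := by
  constructor
  · intro hpsd
    have hdiag : ∀ i, 0 ≤ (S i i).re := fun i ↦ (nonneg_iff.mp hpsd.diag_nonneg).1
    exact ⟨hdiag 0, hdiag 1, hdiag 2,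
      exists_contractions_of_normSq_le (hdiag 0) (hdiag 1) (hdiag 2) (hpsd.normSq_apply_le 0 1)
        (hpsd.normSq_apply_le 1 2) (hpsd.normSq_apply_le 0 2) hpsd.normSq_schur_fin_three_le⟩
  · rintro ⟨hA, hB, hC, g12, g23, g13, h12, h23, h13, e01, e12, e02⟩
    refine hS.posSemidef_of_eq_correlation ?_ h12 h23 h13 e01 e12 e02
    intro i
    fin_cases i
    exacts [hA, hB, hC]
end

section
/- Let S11, S22, S33 be nonnegative reals and g12, g23, g13 complex numbers of modulus at most 1, and let S be the 3×3 Hermitian matrix with diagonal S11, S22, S33 and S12 = √S11 · g12 · √S22, S23 = √S22 · g23 · √S33, S13 = √S11 · (g12·g23 + d12·g13·d23) · √S33, where d_{kj} = √(1−|g_{kj}|²). Then S = G* G, where G is the upper triangular matrix with rows (√S11, g12·√S22, (g12·g23 + d12·g13·d23)·√S33), (0, d12·√S22, (d12·g23 − conj(g12)·g13·d23)·√S33), and (0, 0, d13·d23·√S33). -/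
/-!
Factor `G = C * D` with `D = diagonal (√S₁₁, √S₂₂, √S₃₃)`, where `C` is the same triangular
matrix for unit diagonal. Since `D` is real diagonal, `Gᴴ * G = D * (Cᴴ * C) * D`, and `Cᴴ * C` is
the unit-diagonal matrix with entries `g₁₂`, `g₂₃`, `g₁₂ g₂₃ + d₁₂ g₁₃ d₂₃`: each entry reduces to a
polynomial identity once `d ^ 2 = 1 - ‖g‖ ^ 2` is used for the three pairs `(g, d)`.
-/

open Matrix ComplexConjugate

theorem RCLike.ofReal_sq_eq_one_sub_conj_mul {𝕜 : Type*} [RCLike 𝕜] {g : 𝕜} {d : ℝ}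
    (hd : d ^ 2 = 1 - ‖g‖ ^ 2) : (d : 𝕜) ^ 2 = 1 - conj g * g := by
  rw [RCLike.conj_mul, ← RCLike.ofReal_pow, hd]
  push_cast; rfl

def unitCholeskyFactor3 {𝕜 : Type*} [RCLike 𝕜] (g12 g23 g13 : 𝕜) (d12 d23 d13 : ℝ) :
    Matrix (Fin 3) (Fin 3) 𝕜 :=
  !![1, g12, g12 * g23 + d12 * g13 * d23;
      0, d12, d12 * g23 - star g12 * g13 * d23;
      0, 0, d13 * d23]

theorem unitCholeskyFactor3_conjTranspose_mul_self {𝕜 : Type*} [RCLike 𝕜]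
    (g12 g23 g13 : 𝕜) (d12 d23 d13 : ℝ)
    (hd12 : d12 ^ 2 = 1 - ‖g12‖ ^ 2) (hd23 : d23 ^ 2 = 1 - ‖g23‖ ^ 2)
    (hd13 : d13 ^ 2 = 1 - ‖g13‖ ^ 2) :
    (unitCholeskyFactor3 g12 g23 g13 d12 d23 d13)ᴴ * unitCholeskyFactor3 g12 g23 g13 d12 d23 d13 =
    !![1, g12, g12 * g23 + d12 * g13 * d23;
       star g12, 1, g23;
       star (g12 * g23 + d12 * g13 * d23), star g23, 1] := by
  have e12 := RCLike.ofReal_sq_eq_one_sub_conj_mul (𝕜 := 𝕜) hd12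
  have e23 := RCLike.ofReal_sq_eq_one_sub_conj_mul (𝕜 := 𝕜) hd23
  have e13 := RCLike.ofReal_sq_eq_one_sub_conj_mul (𝕜 := 𝕜) hd13
  ext i j
  fin_cases i <;> fin_cases j <;>
    simp [unitCholeskyFactor3, Matrix.mul_apply, Fin.sum_univ_three, Matrix.conjTranspose_apply]
  · linear_combination e12
  · linear_combination g23 * e12
  · linear_combination conj g23 * e12
  · linear_combination (conj g23 * g23 + d23 ^ 2 * conj g13 * g13) * e12 + d23 ^ 2 * e13 + e23

theorem Matrix.IsHermitian.conjTranspose_mul_mul_self {n α : Type*} [Fintype n]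
    [NonUnitalSemiring α] [StarRing α] {D : Matrix n n α} (hD : D.IsHermitian)
    (C : Matrix n n α) : (C * D)ᴴ * (C * D) = D * (Cᴴ * C) * D := by
  simp only [conjTranspose_mul, hD.eq, Matrix.mul_assoc]

/-- the d = 3 scalar case of the Cholesky factorization `S = G* G`
produced by the parametrization. -/
theorem stmt_3 (S11 S22 S33 : ℝ) (h11 : 0 ≤ S11) (h22 : 0 ≤ S22) (h33 : 0 ≤ S33)
    (g12 g23 g13 : ℂ) (hg12 : ‖g12‖ ≤ 1) (hg23 : ‖g23‖ ≤ 1) (hg13 : ‖g13‖ ≤ 1)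
    (d12 d23 d13 : ℝ)
    (hd12 : d12 = Real.sqrt (1 - ‖g12‖ ^ 2)) (hd23 : d23 = Real.sqrt (1 - ‖g23‖ ^ 2))
    (hd13 : d13 = Real.sqrt (1 - ‖g13‖ ^ 2))
    (S G : Matrix (Fin 3) (Fin 3) ℂ)
    (hS : S = !![(S11 : ℂ),
                 (Real.sqrt S11 : ℂ) * g12 * (Real.sqrt S22 : ℂ),
                 (Real.sqrt S11 : ℂ) * (g12 * g23 + (d12 : ℂ) * g13 * (d23 : ℂ)) *
                   (Real.sqrt S33 : ℂ);
                 star ((Real.sqrt S11 : ℂ) * g12 * (Real.sqrt S22 : ℂ)),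
                 (S22 : ℂ),
                 (Real.sqrt S22 : ℂ) * g23 * (Real.sqrt S33 : ℂ);
                 star ((Real.sqrt S11 : ℂ) * (g12 * g23 + (d12 : ℂ) * g13 * (d23 : ℂ)) *
                   (Real.sqrt S33 : ℂ)),
                 star ((Real.sqrt S22 : ℂ) * g23 * (Real.sqrt S33 : ℂ)),
                 (S33 : ℂ)])
    (hG : G = !![(Real.sqrt S11 : ℂ),
                 g12 * (Real.sqrt S22 : ℂ),
                 (g12 * g23 + (d12 : ℂ) * g13 * (d23 : ℂ)) * (Real.sqrt S33 : ℂ);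
                 0,
                 (d12 : ℂ) * (Real.sqrt S22 : ℂ),
                 ((d12 : ℂ) * g23 - star g12 * g13 * (d23 : ℂ)) * (Real.sqrt S33 : ℂ);
                 0, 0, (d13 : ℂ) * (d23 : ℂ) * (Real.sqrt S33 : ℂ)]) :
    S = Gᴴ * G := by
  have sq_d : ∀ {g : ℂ} {d : ℝ}, ‖g‖ ≤ 1 → d = √(1 - ‖g‖ ^ 2) → d ^ 2 = 1 - ‖g‖ ^ 2 :=
    fun hg hd => hd ▸ Real.sq_sqrt (sub_nonneg.2 (pow_le_one₀ (norm_nonneg _) hg))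
  have sq_sqrt : ∀ {x : ℝ}, 0 ≤ x → ((√x : ℝ) : ℂ) * √x = x := fun hx => by
    rw [← Complex.ofReal_mul, Real.mul_self_sqrt hx]
  set D : Matrix (Fin 3) (Fin 3) ℂ := diagonal fun i => ((![√S11, √S22, √S33] i : ℝ) : ℂ)
  have hD : D.IsHermitian := isHermitian_diagonal_of_self_adjoint _ <| by
    ext i; simp
  have hG' : G = unitCholeskyFactor3 g12 g23 g13 d12 d23 d13 * D := by
    subst hG; ext i j; fin_cases i <;> fin_cases j <;> simp [unitCholeskyFactor3, D, mul_diagonal]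
  have hS' : S = D * !![1, g12, g12 * g23 + d12 * g13 * d23;
                        star g12, 1, g23;
                        star (g12 * g23 + d12 * g13 * d23), star g23, 1] * D := by
    subst hS; ext i j; fin_cases i <;> fin_cases j <;>
      simp [D, mul_diagonal, diagonal_mul, sq_sqrt, h11, h22, h33] <;> ring
  rw [hS', hG', hD.conjTranspose_mul_mul_self]
  exact congrArg (D * · * D) (unitCholeskyFactor3_conjTranspose_mul_self _ _ _ _ _ _
    (sq_d hg12 hd12) (sq_d hg23 hd23) (sq_d hg13 hd13)).symm
end

section
/- Let S11, S22, S33 be nonnegative reals and g12, g23, g13 complex numbers of modulus at most 1, and let S be the 3×3 Hermitian matrix with diagonal S11, S22, S33 and S12 = √S11 · g12 · √S22, S23 = √S22 · g23 · √S33, S13 = √S11 · (g12·g23 + d12·g13·d23) · √S33, where d_{kj} = √(1−|g_{kj}|²). Then det S = S11 · S22 · S33 · (1−|g12|²) · (1−|g23|²) · (1−|g13|²). -/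
open Matrix

/-! Conjugating by `diagonal ![√S11, √S22, √S33]` reduces `S` to a matrix `G` with unit diagonal,
so `det S = S11 S22 S33 · det G`. Writing `G₁₃ = g12 g23 + x` with `x = d12 g13 d23`, all terms
of `det G` involving `g12 g23` cancel and `det G = (1 - |g12|²)(1 - |g23|²) - |x|²`; finally
`|x|² = d12² d23² |g13|²` with `d² = 1 - |g|²`. -/

theorem Matrix.det_fin_three_of_unit_diagonal {R : Type*} [CommRing R] [StarRing R] (a b x : R) :
    !![1, a, a * b + x; star a, 1, b; star (a * b + x), star b, 1].det =
      (1 - a * star a) * (1 - b * star b) - x * star x := by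
  simp only [det_fin_three, of_apply, cons_val', cons_val_zero, cons_val_one, cons_val_two,
    head_cons, tail_cons, empty_val', cons_val_fin_one, head_fin_const, star_add, star_mul]
  ring

theorem Matrix.det_diagonal_mul_mul_diagonal {n R : Type*} [Fintype n] [DecidableEq n]
    [CommRing R] (s : n → R) (G : Matrix n n R) :
    (diagonal s * G * diagonal s).det = (∏ i, s i * s i) * G.det := by
  rw [det_mul, det_mul, det_diagonal, Finset.prod_mul_distrib]
  ring

theorem Complex.ofReal_sqrt_mul_self {t : ℝ} (ht : 0 ≤ t) :
    (Real.sqrt t : ℂ) * Real.sqrt t = t := by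
  rw [← ofReal_mul, Real.mul_self_sqrt ht]

theorem Complex.ofReal_sqrt_one_sub_norm_sq_mul_self {z : ℂ} (hz : ‖z‖ ≤ 1) :
    (Real.sqrt (1 - ‖z‖ ^ 2) : ℂ) * Real.sqrt (1 - ‖z‖ ^ 2) = 1 - ‖z‖ ^ 2 := by
  rw [ofReal_sqrt_mul_self (by nlinarith [norm_nonneg z])]
  push_cast; ring

theorem stmt_4_general (S11 S22 S33 : ℝ) (h11 : 0 ≤ S11) (h22 : 0 ≤ S22) (h33 : 0 ≤ S33)
    (g12 g23 g13 : ℂ) (hg12 : ‖g12‖ ≤ 1) (hg23 : ‖g23‖ ≤ 1)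
    (d12 d23 : ℝ)
    (hd12 : d12 = Real.sqrt (1 - ‖g12‖ ^ 2)) (hd23 : d23 = Real.sqrt (1 - ‖g23‖ ^ 2))
    (S : Matrix (Fin 3) (Fin 3) ℂ)
    (hS : S = !![(S11 : ℂ),
                 (Real.sqrt S11 : ℂ) * g12 * (Real.sqrt S22 : ℂ),
                 (Real.sqrt S11 : ℂ) * (g12 * g23 + (d12 : ℂ) * g13 * (d23 : ℂ)) *
                   (Real.sqrt S33 : ℂ);
                 star ((Real.sqrt S11 : ℂ) * g12 * (Real.sqrt S22 : ℂ)),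
                 (S22 : ℂ),
                 (Real.sqrt S22 : ℂ) * g23 * (Real.sqrt S33 : ℂ);
                 star ((Real.sqrt S11 : ℂ) * (g12 * g23 + (d12 : ℂ) * g13 * (d23 : ℂ)) *
                   (Real.sqrt S33 : ℂ)),
                 star ((Real.sqrt S22 : ℂ) * g23 * (Real.sqrt S33 : ℂ)),
                 (S33 : ℂ)]) :
    S.det = ((S11 * S22 * S33 * (1 - ‖g12‖ ^ 2) * (1 - ‖g23‖ ^ 2) * (1 - ‖g13‖ ^ 2) : ℝ) : ℂ) := by
  set s : Fin 3 → ℂ := ![Real.sqrt S11, Real.sqrt S22, Real.sqrt S33]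
  set G : Matrix (Fin 3) (Fin 3) ℂ :=
    !![1, g12, g12 * g23 + d12 * g13 * d23; star g12, 1, g23;
      star (g12 * g23 + d12 * g13 * d23), star g23, 1]
  have hS_eq : S = diagonal s * G * diagonal s := by
    subst hS
    ext i j
    fin_cases i <;> fin_cases j <;>
      simp [s, G, Complex.ofReal_sqrt_mul_self, h11, h22, h33] <;> ring
  have hx : (d12 * g13 * d23 : ℂ) * star (d12 * g13 * d23 : ℂ) =
      (1 - ‖g12‖ ^ 2) * (1 - ‖g23‖ ^ 2) * ‖g13‖ ^ 2 := calc
    _ = (d12 * d12 : ℂ) * (d23 * d23) * (g13 * star g13) := by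
      simp only [star_mul', Complex.star_def, Complex.conj_ofReal]; ring
    _ = _ := by
      rw [hd12, hd23, Complex.ofReal_sqrt_one_sub_norm_sq_mul_self hg12,
        Complex.ofReal_sqrt_one_sub_norm_sq_mul_self hg23, Complex.star_def, Complex.mul_conj']
  have hs : ∏ i, s i * s i = S11 * S22 * S33 := by
    simp [s, Fin.prod_univ_three, Complex.ofReal_sqrt_mul_self, h11, h22, h33]
  rw [hS_eq, det_diagonal_mul_mul_diagonal, hs, det_fin_three_of_unit_diagonal, hx,
    Complex.star_def, Complex.mul_conj', Complex.mul_conj']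
  push_cast
  ring

/-- the d = 3 scalar case of the determinant formula
`det ρ = (∏ ρ_kk) ∏ (1 − |g_kj|²)`. -/
theorem stmt_4 (S11 S22 S33 : ℝ) (h11 : 0 ≤ S11) (h22 : 0 ≤ S22) (h33 : 0 ≤ S33)
    (g12 g23 g13 : ℂ) (hg12 : ‖g12‖ ≤ 1) (hg23 : ‖g23‖ ≤ 1) (hg13 : ‖g13‖ ≤ 1)
    (d12 d23 d13 : ℝ)
    (hd12 : d12 = Real.sqrt (1 - ‖g12‖ ^ 2)) (hd23 : d23 = Real.sqrt (1 - ‖g23‖ ^ 2))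
    (hd13 : d13 = Real.sqrt (1 - ‖g13‖ ^ 2))
    (S : Matrix (Fin 3) (Fin 3) ℂ)
    (hS : S = !![(S11 : ℂ),
                 (Real.sqrt S11 : ℂ) * g12 * (Real.sqrt S22 : ℂ),
                 (Real.sqrt S11 : ℂ) * (g12 * g23 + (d12 : ℂ) * g13 * (d23 : ℂ)) *
                   (Real.sqrt S33 : ℂ);
                 star ((Real.sqrt S11 : ℂ) * g12 * (Real.sqrt S22 : ℂ)),
                 (S22 : ℂ),
                 (Real.sqrt S22 : ℂ) * g23 * (Real.sqrt S33 : ℂ);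
                 star ((Real.sqrt S11 : ℂ) * (g12 * g23 + (d12 : ℂ) * g13 * (d23 : ℂ)) *
                   (Real.sqrt S33 : ℂ)),
                 star ((Real.sqrt S22 : ℂ) * g23 * (Real.sqrt S33 : ℂ)),
                 (S33 : ℂ)]) :
    S.det = ((S11 * S22 * S33 * (1 - ‖g12‖ ^ 2) * (1 - ‖g23‖ ^ 2) * (1 - ‖g13‖ ^ 2) : ℝ) : ℂ) :=
  stmt_4_general S11 S22 S33 h11 h22 h33 g12 g23 g13 hg12 hg23 d12 d23 hd12 hd23 S hS
end

section
/- Let ρ be a 3×3 positive semidefinite complex matrix of trace 1 with ρ11, ρ22, ρ33 all strictly positive, and let g12, g23, g13 be complex numbers of modulus at most 1 satisfying ρ12 = √ρ11 · g12 · √ρ22, ρ23 = √ρ22 · g23 · √ρ33, ρ13 = √ρ11 · (g12·g23 + √(1−|g12|²)·g13·√(1−|g23|²)) · √ρ33. Then ρ has rank 1 if and only if |g12| = 1 and |g23| = 1. -/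
open Matrix ComplexOrder

lemma aux_rank_submatrix_le {k : ℕ} (A : Matrix (Fin 3) (Fin 3) ℂ) (f : Fin k → Fin 3) :
    (A.submatrix f f).rank ≤ A.rank := by
  have h : A.submatrix f f =
      ((1 : Matrix (Fin 3) (Fin 3) ℂ).submatrix f (Equiv.refl _)) * A *
      ((1 : Matrix (Fin 3) (Fin 3) ℂ).submatrix (Equiv.refl _) f) := by
    rw [Matrix.mul_submatrix_one, Matrix.one_submatrix_mul]
    simp [Function.comp]
  rw [h]
  exact (Matrix.rank_mul_le_left _ _).trans (Matrix.rank_mul_le_right _ _)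

lemma aux_det_eq_zero_of_rank_le_one (B : Matrix (Fin 2) (Fin 2) ℂ) (h : B.rank ≤ 1) :
    B.det = 0 := by
  by_contra hd
  have hu : IsUnit B := (Matrix.isUnit_iff_isUnit_det B).2 (isUnit_iff_ne_zero.2 hd)
  have := Matrix.rank_of_isUnit B hu
  simp [Fintype.card_fin] at this
  omega

lemma aux_mul_conj (g : ℂ) : g * starRingEnd ℂ g = ((‖g‖ : ℝ) : ℂ) ^ 2 := by
  rw [Complex.mul_conj]
  norm_cast
  rw [Complex.normSq_eq_norm_sq]

/-- the d = 3 instance of the purity criterion: a 3×3 state with strictly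
positive diagonal has rank 1 iff the parameters `g12`, `g23` are unimodular. -/
theorem stmt_8 (ρ : Matrix (Fin 3) (Fin 3) ℂ) (hρ : ρ.PosSemidef) (ht : ρ.trace = 1)
    (h11 : 0 < (ρ 0 0).re) (h22 : 0 < (ρ 1 1).re) (h33 : 0 < (ρ 2 2).re)
    (g12 g23 g13 : ℂ) (hg12 : ‖g12‖ ≤ 1) (hg23 : ‖g23‖ ≤ 1) (hg13 : ‖g13‖ ≤ 1)
    (e12 : ρ 0 1 = (Real.sqrt (ρ 0 0).re : ℂ) * g12 * (Real.sqrt (ρ 1 1).re : ℂ))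
    (e23 : ρ 1 2 = (Real.sqrt (ρ 1 1).re : ℂ) * g23 * (Real.sqrt (ρ 2 2).re : ℂ))
    (e13 : ρ 0 2 = (Real.sqrt (ρ 0 0).re : ℂ) *
        (g12 * g23 + (Real.sqrt (1 - ‖g12‖ ^ 2) : ℂ) * g13 * (Real.sqrt (1 - ‖g23‖ ^ 2) : ℂ)) *
        (Real.sqrt (ρ 2 2).re : ℂ)) :
    ρ.rank = 1 ↔ ‖g12‖ = 1 ∧ ‖g23‖ = 1 := by
  have hH := hρ.1
  set a := Real.sqrt (ρ 0 0).re with ha_def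
  set b := Real.sqrt (ρ 1 1).re with hb_def
  set c := Real.sqrt (ρ 2 2).re with hc_def
  have ha0 : 0 < a := Real.sqrt_pos.2 h11
  have hb0 : 0 < b := Real.sqrt_pos.2 h22
  have hc0 : 0 < c := Real.sqrt_pos.2 h33
  have ha2 : a ^ 2 = (ρ 0 0).re := Real.sq_sqrt h11.le
  have hb2 : b ^ 2 = (ρ 1 1).re := Real.sq_sqrt h22.le
  have hc2 : c ^ 2 = (ρ 2 2).re := Real.sq_sqrt h33.le
  have d0 : ρ 0 0 = ((a : ℂ) ^ 2) := by
    have hh : (((ρ 0 0).re : ℝ) : ℂ) = ρ 0 0 := Complex.conj_eq_iff_re.1 (hH.apply 0 0)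
    rw [← hh, ← ha2]; push_cast; ring
  have d1 : ρ 1 1 = ((b : ℂ) ^ 2) := by
    have hh : (((ρ 1 1).re : ℝ) : ℂ) = ρ 1 1 := Complex.conj_eq_iff_re.1 (hH.apply 1 1)
    rw [← hh, ← hb2]; push_cast; ring
  have d2 : ρ 2 2 = ((c : ℂ) ^ 2) := by
    have hh : (((ρ 2 2).re : ℝ) : ℂ) = ρ 2 2 := Complex.conj_eq_iff_re.1 (hH.apply 2 2)
    rw [← hh, ← hc2]; push_cast; ring
  constructor
  · intro hr
    have key : ∀ (i j : Fin 3) (g : ℂ) (x y : ℝ), 0 < x → 0 < y →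
        ρ i i = ((x : ℂ) ^ 2) → ρ j j = ((y : ℂ) ^ 2) →
        ρ i j = (x : ℂ) * g * (y : ℂ) → ‖g‖ = 1 := by
      intro i j g x y hx hy hdi hdj he
      have hrle : (ρ.submatrix ![i, j] ![i, j]).rank ≤ 1 := by
        rw [← hr]; exact aux_rank_submatrix_le ρ _
      have hdet := aux_det_eq_zero_of_rank_le_one _ hrle
      rw [Matrix.det_fin_two] at hdet
      simp only [Matrix.submatrix_apply, Matrix.cons_val_zero, Matrix.cons_val_one,
        Matrix.head_cons] at hdet
      have hji : ρ j i = starRingEnd ℂ (ρ i j) := (hH.apply j i).symm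
      rw [sub_eq_zero] at hdet
      rw [hji, he, hdi, hdj] at hdet
      have hre : x ^ 2 * y ^ 2 = x ^ 2 * ‖g‖ ^ 2 * y ^ 2 := by
        have h2 : ((x ^ 2 * y ^ 2 : ℝ) : ℂ) = ((x ^ 2 * ‖g‖ ^ 2 * y ^ 2 : ℝ) : ℂ) := by
          push_cast
          rw [hdet]
          have hc : (starRingEnd ℂ) ((x : ℂ) * g * y) =
              (x : ℂ) * (starRingEnd ℂ) g * (y : ℂ) := by
            simp [_root_.map_mul, Complex.conj_ofReal]
          rw [hc]
          linear_combination ((x : ℂ) ^ 2 * (y : ℂ) ^ 2) * aux_mul_conj g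
        exact_mod_cast h2
      have hsq : ‖g‖ ^ 2 = 1 := by
        have h1 : x ^ 2 * y ^ 2 * (‖g‖ ^ 2 - 1) = 0 := by linarith [hre]
        have hxy : (x : ℝ) ^ 2 * y ^ 2 ≠ 0 := by positivity
        have := mul_eq_zero.1 h1
        rcases this with h | h
        · exact absurd h hxy
        · linarith
      have : ‖g‖ = Real.sqrt (‖g‖ ^ 2) := (Real.sqrt_sq (norm_nonneg g)).symm
      rw [this, hsq, Real.sqrt_one]
    exact ⟨key 0 1 g12 a b ha0 hb0 d0 d1 e12, key 1 2 g23 b c hb0 hc0 d1 d2 e23⟩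
  · rintro ⟨h12, h23⟩
    have hn12 : g12 * starRingEnd ℂ g12 = 1 := by
      rw [aux_mul_conj, h12]; norm_num
    have hn23 : g23 * starRingEnd ℂ g23 = 1 := by
      rw [aux_mul_conj, h23]; norm_num
    have hs12 : Real.sqrt (1 - ‖g12‖ ^ 2) = 0 := by rw [h12]; norm_num
    have e13' : ρ 0 2 = (a : ℂ) * (g12 * g23) * (c : ℂ) := by
      rw [e13, hs12]; push_cast; ring
    have h10' : ρ 1 0 = (a : ℂ) * starRingEnd ℂ g12 * (b : ℂ) := by
      rw [← hH.apply 1 0, e12]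
      simp [_root_.map_mul, Complex.conj_ofReal]
    have h20' : ρ 2 0 = (a : ℂ) * (starRingEnd ℂ g12 * starRingEnd ℂ g23) * (c : ℂ) := by
      rw [← hH.apply 2 0, e13']
      simp [_root_.map_mul, Complex.conj_ofReal]
    have h21' : ρ 2 1 = (b : ℂ) * starRingEnd ℂ g23 * (c : ℂ) := by
      rw [← hH.apply 2 1, e23]
      simp [_root_.map_mul, Complex.conj_ofReal]
    set v : Fin 3 → ℂ :=
      ![(a : ℂ), (b : ℂ) * starRingEnd ℂ g12, (c : ℂ) * (starRingEnd ℂ g12 * starRingEnd ℂ g23)]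
      with hv
    have v0 : v 0 = ((a : ℝ) : ℂ) := rfl
    have v1 : v 1 = (b : ℂ) * starRingEnd ℂ g12 := rfl
    have v2 : v 2 = (c : ℂ) * (starRingEnd ℂ g12 * starRingEnd ℂ g23) := rfl
    have key : ρ = Matrix.vecMulVec v (fun j => starRingEnd ℂ (v j)) := by
      ext i j
      rw [Matrix.vecMulVec_apply]
      fin_cases i <;> fin_cases j
      · show ρ 0 0 = v 0 * starRingEnd ℂ (v 0)
        simp only [v0, Complex.conj_ofReal]
        linear_combination d0
      · show ρ 0 1 = v 0 * starRingEnd ℂ (v 1)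
        simp only [v0, v1, _root_.map_mul, Complex.conj_ofReal, Complex.conj_conj]
        linear_combination e12
      · show ρ 0 2 = v 0 * starRingEnd ℂ (v 2)
        simp only [v0, v2, _root_.map_mul, Complex.conj_ofReal, Complex.conj_conj]
        linear_combination e13'
      · show ρ 1 0 = v 1 * starRingEnd ℂ (v 0)
        simp only [v0, v1, Complex.conj_ofReal]
        linear_combination h10'
      · show ρ 1 1 = v 1 * starRingEnd ℂ (v 1)
        simp only [v1, _root_.map_mul, Complex.conj_ofReal, Complex.conj_conj]
        linear_combination d1 - ((b : ℂ)) ^ 2 * hn12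
      · show ρ 1 2 = v 1 * starRingEnd ℂ (v 2)
        simp only [v1, v2, _root_.map_mul, Complex.conj_ofReal, Complex.conj_conj]
        linear_combination e23 - (b : ℂ) * (c : ℂ) * g23 * hn12
      · show ρ 2 0 = v 2 * starRingEnd ℂ (v 0)
        simp only [v0, v2, Complex.conj_ofReal]
        linear_combination h20'
      · show ρ 2 1 = v 2 * starRingEnd ℂ (v 1)
        simp only [v1, v2, _root_.map_mul, Complex.conj_ofReal, Complex.conj_conj]
        linear_combination h21' - (b : ℂ) * (c : ℂ) * (starRingEnd ℂ g23) * hn12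
      · show ρ 2 2 = v 2 * starRingEnd ℂ (v 2)
        simp only [v2, _root_.map_mul, Complex.conj_ofReal, Complex.conj_conj]
        linear_combination d2 - (c : ℂ) ^ 2 * (g12 * starRingEnd ℂ g12) * hn23 -
          (c : ℂ) ^ 2 * hn12
    have hle : ρ.rank ≤ 1 := by
      rw [key, Matrix.vecMulVec_eq Unit]
      exact (Matrix.rank_mul_le_left _ _).trans
        ((Matrix.rank_le_card_width _).trans (by simp))
    have hge : 1 ≤ ρ.rank := by
      have hdet : (ρ.submatrix ![(0 : Fin 3)] ![(0 : Fin 3)]).det ≠ 0 := by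
        rw [Matrix.det_fin_one]
        simp only [Matrix.submatrix_apply, Matrix.cons_val_zero]
        intro h
        rw [h] at h11
        simp at h11
      have hu : IsUnit (ρ.submatrix ![(0 : Fin 3)] ![(0 : Fin 3)]) :=
        (Matrix.isUnit_iff_isUnit_det _).2 (isUnit_iff_ne_zero.2 hdet)
      have h1 := Matrix.rank_of_isUnit _ hu
      have h2 := aux_rank_submatrix_le ρ ![(0 : Fin 3)]
      rw [h1] at h2
      simpa using h2
    omega
end

section
/- Let A and B be complex numbers with |A| < 1 and |B| < 1, and let T be the 4×4 matrix T = [[1, B, A, AB], [conj(B), 1, A·conj(B), A], [conj(A), B·conj(A), 1, B], [conj(B)·conj(A), conj(A), conj(B), 1]] (i.e., T = S1 ⊗ S2 for S1 = [[1,A],[conj(A),1]], S2 = [[1,B],[conj(B),1]]). Then the parameters Γ12 = B, Γ23 = A·conj(B), Γ34 = B, Γ13 = Γ24 = A·√(1−|B|²)/√(1−|A|²|B|²), Γ14 = −A·B, all of modulus at most 1, satisfy the d = 4 parametrization equations for T: T_{k,k+1} = Γ_{k,k+1} for k = 1,2,3; T_{k,k+2} = Γ_{k,k+1}Γ_{k+1,k+2}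 + d_{k,k+1}·Γ_{k,k+2}·d_{k+1,k+2} for k = 1,2; and T14 = Γ12Γ23Γ34 + d12·Γ13·d23·Γ34 + Γ12·d23·Γ24·d34 − d12·Γ13·conj(Γ23)·Γ24·d34 + d12·d13·Γ14·d24·d34, where d_{kj} = √(1−|Γ_{kj}|²). -/
/-!
With `s = √(1 - |B|²)` and `t = √(1 - |A|²|B|²)` one has `d12 = d34 = s`, `d23 = t`, and, since
`1 - |A s / t|² = (1 - |A|²) / t²`, `d13 = d24 = √(1 - |A|²) / t`. Substituting, every equation
becomes a polynomial identity in `A`, `B`, their conjugates, `s`, `t` and `d13`, which holds modulo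
`A Ā = |A|²`, `B B̄ = |B|²` and the three defining relations `s² = 1 - |B|²`, `t² = 1 - |A|²|B|²`,
`d13² t² = 1 - |A|²`.
-/

open Complex

lemma norm_mul_ofReal_div_ofReal (z : ℂ) {s t : ℝ} (hs : 0 ≤ s) (ht : 0 ≤ t) :
    ‖z * s / t‖ = ‖z‖ * s / t := by
  rw [norm_div, norm_mul, norm_real, norm_real, Real.norm_of_nonneg hs, Real.norm_of_nonneg ht]

lemma one_sub_sq_mul_sqrt_div_sqrt {a b : ℝ} (hb : b ^ 2 ≤ 1) (hab : a ^ 2 * b ^ 2 < 1) :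
    1 - (a * √(1 - b ^ 2) / √(1 - a ^ 2 * b ^ 2)) ^ 2 = (1 - a ^ 2) / (1 - a ^ 2 * b ^ 2) := by
  have hab' : 1 - a ^ 2 * b ^ 2 ≠ 0 := by linarith
  rw [div_pow, mul_pow, Real.sq_sqrt (by linarith), Real.sq_sqrt (by linarith)]
  field_simp
  ring

lemma sq_mul_sq_lt_one {a b : ℝ} (ha : 0 ≤ a) (hb : 0 ≤ b) (ha1 : a ≤ 1) (hb1 : b < 1) :
    a ^ 2 * b ^ 2 < 1 := by
  rw [← mul_pow]
  exact pow_lt_one₀ (mul_nonneg ha hb) (mul_lt_one_of_nonneg_of_lt_one_right ha1 hb hb1) two_ne_zero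

variable {A B : ℂ}

lemma sqrt_one_sub_norm_sq_mul_sqrt_div_sqrt (hB : ‖B‖ ^ 2 ≤ 1) (hAB : ‖A‖ ^ 2 * ‖B‖ ^ 2 < 1) :
    √(1 - ‖A * (√(1 - ‖B‖ ^ 2) : ℂ) / (√(1 - ‖A‖ ^ 2 * ‖B‖ ^ 2) : ℂ)‖ ^ 2) =
      √(1 - ‖A‖ ^ 2) / √(1 - ‖A‖ ^ 2 * ‖B‖ ^ 2) := by
  rw [norm_mul_ofReal_div_ofReal _ (Real.sqrt_nonneg _) (Real.sqrt_nonneg _),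
    one_sub_sq_mul_sqrt_div_sqrt hB hAB, Real.sqrt_div' _ (by linarith)]

lemma norm_mul_sqrt_div_sqrt_le_one (hA : ‖A‖ ≤ 1) (hB : ‖B‖ < 1) :
    ‖A * (√(1 - ‖B‖ ^ 2) : ℂ) / (√(1 - ‖A‖ ^ 2 * ‖B‖ ^ 2) : ℂ)‖ ≤ 1 := by
  have hAB := sq_mul_sq_lt_one (norm_nonneg A) (norm_nonneg B) hA hB
  rw [norm_mul_ofReal_div_ofReal _ (Real.sqrt_nonneg _) (Real.sqrt_nonneg _)]
  refine (pow_le_one_iff_of_nonneg (by positivity) two_ne_zero).1 ?_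
  have hsq := one_sub_sq_mul_sqrt_div_sqrt (a := ‖A‖) (pow_le_one₀ (norm_nonneg B) hB.le) hAB
  have hpos : 0 ≤ (1 - ‖A‖ ^ 2) / (1 - ‖A‖ ^ 2 * ‖B‖ ^ 2) :=
    div_nonneg (sub_nonneg.2 (pow_le_one₀ (norm_nonneg A) hA)) (by linarith)
  linarith

variable {s t d : ℝ}

lemma param_entry_skip_one (hs : s ^ 2 = 1 - ‖B‖ ^ 2) (ht : t ≠ 0) :
    B * (A * star B) + s * (A * s / t) * t = A := by
  have ht' : (t : ℂ) ≠ 0 := by exact_mod_cast ht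
  have hs' : (s : ℂ) ^ 2 = 1 - (‖B‖ : ℂ) ^ 2 := by exact_mod_cast hs
  have hB' : B * star B = (‖B‖ : ℂ) ^ 2 := mul_conj' B
  field_simp
  linear_combination A * hB' + A * hs'

lemma param_entry_corner (hs : s ^ 2 = 1 - ‖B‖ ^ 2) (ht : t ^ 2 = 1 - ‖A‖ ^ 2 * ‖B‖ ^ 2) (ht0 : t ≠ 0)
    (hd : d ^ 2 * t ^ 2 = 1 - ‖A‖ ^ 2) :
    A * B = B * (A * star B) * B + s * (A * s / t) * t * B + B * t * (A * s / t) * s -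
      s * (A * s / t) * star (A * star B) * (A * s / t) * s + s * d * -(A * B) * d * s := by
  have ht0' : (t : ℂ) ≠ 0 := by exact_mod_cast ht0
  have hs' : (s : ℂ) ^ 2 = 1 - (‖B‖ : ℂ) ^ 2 := by exact_mod_cast hs
  have ht' : (t : ℂ) ^ 2 = 1 - (‖A‖ : ℂ) ^ 2 * (‖B‖ : ℂ) ^ 2 := by exact_mod_cast ht
  have hd' : (d : ℂ) ^ 2 * (t : ℂ) ^ 2 = 1 - (‖A‖ : ℂ) ^ 2 := by exact_mod_cast hd
  have hA' : A * star A = (‖A‖ : ℂ) ^ 2 := mul_conj' A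
  have hB' : B * star B = (‖B‖ : ℂ) ^ 2 := mul_conj' B
  simp only [star_mul', star_star]
  field_simp
  linear_combination -(A * B * t ^ 2) * hB' + A * B * s ^ 4 * hA' + A * B * s ^ 2 * hd' +
    A * B * (1 - 2 * s ^ 2 - ‖B‖ ^ 2) * ht' + A * B * (-1 + ‖A‖ ^ 2 * ‖B‖ ^ 2 + ‖A‖ ^ 2 * s ^ 2) * hs'

/-- the explicit parameters of the tensor product of two 2×2 positive
matrices with unit diagonal, satisfying the d = 4 parametrization equations. -/
theorem stmt_14 (A B : ℂ) (hA : ‖A‖ < 1) (hB : ‖B‖ < 1)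
    (T : Matrix (Fin 4) (Fin 4) ℂ)
    (hT : T = !![1, B, A, A * B;
                 star B, 1, A * star B, A;
                 star A, B * star A, 1, B;
                 star B * star A, star A, star B, 1])
    (Γ12 Γ23 Γ34 Γ13 Γ24 Γ14 : ℂ)
    (h12 : Γ12 = B) (h23 : Γ23 = A * star B) (h34 : Γ34 = B)
    (h13 : Γ13 = A * (Real.sqrt (1 - ‖B‖ ^ 2) : ℂ) /
        (Real.sqrt (1 - ‖A‖ ^ 2 * ‖B‖ ^ 2) : ℂ))
    (h24 : Γ24 = A * (Real.sqrt (1 - ‖B‖ ^ 2) : ℂ) /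
        (Real.sqrt (1 - ‖A‖ ^ 2 * ‖B‖ ^ 2) : ℂ))
    (h14 : Γ14 = -(A * B))
    (d12 d23 d34 d13 d24 : ℝ)
    (hd12 : d12 = Real.sqrt (1 - ‖Γ12‖ ^ 2)) (hd23 : d23 = Real.sqrt (1 - ‖Γ23‖ ^ 2))
    (hd34 : d34 = Real.sqrt (1 - ‖Γ34‖ ^ 2)) (hd13 : d13 = Real.sqrt (1 - ‖Γ13‖ ^ 2))
    (hd24 : d24 = Real.sqrt (1 - ‖Γ24‖ ^ 2)) :
    (‖Γ12‖ ≤ 1 ∧ ‖Γ23‖ ≤ 1 ∧ ‖Γ34‖ ≤ 1 ∧ ‖Γ13‖ ≤ 1 ∧ ‖Γ24‖ ≤ 1 ∧ ‖Γ14‖ ≤ 1) ∧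
    T 0 1 = Γ12 ∧ T 1 2 = Γ23 ∧ T 2 3 = Γ34 ∧
    T 0 2 = Γ12 * Γ23 + (d12 : ℂ) * Γ13 * (d23 : ℂ) ∧
    T 1 3 = Γ23 * Γ34 + (d23 : ℂ) * Γ24 * (d34 : ℂ) ∧
    T 0 3 = Γ12 * Γ23 * Γ34 + (d12 : ℂ) * Γ13 * (d23 : ℂ) * Γ34 +
        Γ12 * (d23 : ℂ) * Γ24 * (d34 : ℂ) -
        (d12 : ℂ) * Γ13 * star Γ23 * Γ24 * (d34 : ℂ) +
        (d12 : ℂ) * (d13 : ℂ) * Γ14 * (d24 : ℂ) * (d34 : ℂ) := by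
  have hAB := sq_mul_sq_lt_one (norm_nonneg A) (norm_nonneg B) hA.le hB
  have hB2 : ‖B‖ ^ 2 ≤ 1 := pow_le_one₀ (norm_nonneg B) hB.le
  subst T Γ12 Γ23 Γ34 Γ13 Γ24 Γ14 d12 d34
  obtain rfl := hd13.trans (sqrt_one_sub_norm_sq_mul_sqrt_div_sqrt hB2 hAB)
  obtain rfl := hd24.trans (sqrt_one_sub_norm_sq_mul_sqrt_div_sqrt hB2 hAB)
  obtain rfl : d23 = √(1 - ‖A‖ ^ 2 * ‖B‖ ^ 2) := by rw [hd23, norm_mul, norm_star, mul_pow]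
  set s := √(1 - ‖B‖ ^ 2)
  set t := √(1 - ‖A‖ ^ 2 * ‖B‖ ^ 2)
  have hs : s ^ 2 = 1 - ‖B‖ ^ 2 := Real.sq_sqrt (by linarith)
  have ht : t ^ 2 = 1 - ‖A‖ ^ 2 * ‖B‖ ^ 2 := Real.sq_sqrt (by linarith)
  have ht0 : t ≠ 0 := (Real.sqrt_pos.2 (by linarith)).ne'
  have hd : (√(1 - ‖A‖ ^ 2) / t) ^ 2 * t ^ 2 = 1 - ‖A‖ ^ 2 := by
    rw [div_pow, div_mul_cancel₀ _ (pow_ne_zero 2 ht0),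
      Real.sq_sqrt (sub_nonneg.2 (pow_le_one₀ (norm_nonneg A) hA.le))]
  refine ⟨⟨hB.le, ?_, hB.le, norm_mul_sqrt_div_sqrt_le_one hA.le hB,
    norm_mul_sqrt_div_sqrt_le_one hA.le hB, ?_⟩, rfl, rfl, rfl,
    (param_entry_skip_one hs ht0).symm, ?_, ?_⟩
  · rw [norm_mul, norm_star]; exact mul_le_one₀ hA.le (norm_nonneg B) hB.le
  · rw [norm_neg, norm_mul]; exact mul_le_one₀ hA.le (norm_nonneg B) hB.le
  · show A = _
    linear_combination -param_entry_skip_one (A := A) hs ht0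
  · exact param_entry_corner hs ht ht0 hd
end

section
/- Let d ≥ 2 and let S be a d×d complex Hermitian matrix with S_{kk} = 1 for all k. For 0 ≤ t ≤ d−2 define: R(−t) ∈ M_d(ℂ) by R(−t)_{ij} = S_{t+i, t+j} if both i ≤ d−t and j ≤ d−t, and R(−t)_{ij} = δ_{ij} otherwise (1-based indices); F ∈ M_d(ℂ) the lower shift with F_{ij} = δ_{i, j+1}; G(−t) the d×2 matrix whose first column u has u_1 = 1, u_i = conj(S_{t+1, t+i}) for 2 ≤ i ≤ d−t, and u_i = 0 for i > d−t, and whose second column v has v_1 = 0 and v_i = u_i for i ≥ 2; and J = diag(1, −1). Then for every t with 0 ≤ t ≤ d−2: R(−t) − F · R(−t−1) · F* = G(−t) · J · G(−t)*. -/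
open Matrix

/-- `R(−t)`: the top-left `(d−t)×(d−t)` block is the trailing principal submatrix of `S`
(1-based entries `S_{t+i,t+j}`), and the rest is the identity. -/
def dispR (d : ℕ) (S : Matrix (Fin d) (Fin d) ℂ) (t : ℕ) : Matrix (Fin d) (Fin d) ℂ :=
  fun i j =>
    if h : i.val + t < d ∧ j.val + t < d then S ⟨i.val + t, h.1⟩ ⟨j.val + t, h.2⟩
    else if i = j then 1 else 0

/-- The lower shift matrix `F`, with `F_{ij} = δ_{i,j+1}`. -/
def dispF (d : ℕ) : Matrix (Fin d) (Fin d) ℂ :=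
  fun i j => if i.val = j.val + 1 then 1 else 0

/-- The `d×2` generator matrix `G(−t)`: its first column `u` has `u_1 = 1`,
`u_i = conj S_{t+1, t+i}` for `2 ≤ i ≤ d−t` and `0` beyond, and the second column
agrees with the first except that its top entry is `0`. -/
def dispG (d : ℕ) (S : Matrix (Fin d) (Fin d) ℂ) (t : ℕ) : Matrix (Fin d) (Fin 2) ℂ :=
  fun i c =>
    if i.val = 0 then (if c = 0 then 1 else 0)
    else if h : t + i.val < d then
      star (S ⟨t, Nat.lt_of_le_of_lt (Nat.le_add_right t i.val) h⟩ ⟨t + i.val, h⟩)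
    else 0

/-- The signature matrix `J = diag(1, −1)`. -/
def dispJ : Matrix (Fin 2) (Fin 2) ℂ := !![1, 0; 0, -1]

/-! Away from the first row and column, `F R(−t−1) F*` is `R(−t)` shifted back into place, so
`R(−t) − F R(−t−1) F*` is supported on the first row and column, where it agrees with `R(−t)`:
its first row is `u*` (with `S_{tt} = 1` at the corner) and, `S` being Hermitian, its first column
is `u`. Because the columns `u`, `v` of `G(−t)` differ only in their top entry,
`G(−t) J G(−t)* = u u* − v v*` has exactly this shape. -/

section Displacement

variable {d : ℕ}

lemma dispF_mul_apply (M : Matrix (Fin d) (Fin d) ℂ) (i j : Fin d) :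
    (dispF d * M) i j = if h : i.val = 0 then 0 else M ⟨i.val - 1, by omega⟩ j := by
  split_ifs with hi
  · simp [mul_apply, dispF, hi]
  · rw [mul_apply, Finset.sum_eq_single ⟨i.val - 1, by omega⟩]
    · simp only [dispF, ite_mul, one_mul, zero_mul, ite_eq_left_iff]
      omega
    · intro k _ hk
      have : i.val ≠ k.val + 1 := fun h => hk (Fin.ext (by simp; omega))
      simp [dispF, this]
    · simp

lemma mul_dispF_conjTranspose_apply (M : Matrix (Fin d) (Fin d) ℂ) (i j : Fin d) :
    (M * (dispF d)ᴴ) i j = if h : j.val = 0 then 0 else M i ⟨j.val - 1, by omega⟩ := by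
  rw [← conjTranspose_conjTranspose M, ← conjTranspose_mul, conjTranspose_apply,
    dispF_mul_apply]
  split_ifs <;> simp

lemma dispF_mul_mul_conjTranspose_apply (M : Matrix (Fin d) (Fin d) ℂ) (i j : Fin d) :
    (dispF d * M * (dispF d)ᴴ) i j =
      if h : i.val = 0 ∨ j.val = 0 then 0
      else M ⟨i.val - 1, by omega⟩ ⟨j.val - 1, by omega⟩ := by
  rw [mul_dispF_conjTranspose_apply, dispF_mul_apply]
  by_cases hi : i.val = 0 <;> by_cases hj : j.val = 0 <;> simp [hi, hj]

variable {S : Matrix (Fin d) (Fin d) ℂ}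

lemma dispR_apply_self (hdiag : ∀ k, S k k = 1) (t : ℕ) (i : Fin d) : dispR d S t i i = 1 := by
  unfold dispR
  split_ifs <;> simp_all

lemma Matrix.IsHermitian.dispR (hS : S.IsHermitian) (t : ℕ) : (dispR d S t).IsHermitian := by
  ext i j
  simp only [_root_.dispR, conjTranspose_apply]
  by_cases h : i.val + t < d ∧ j.val + t < d
  · rw [dif_pos h, dif_pos h.symm]
    exact hS.apply _ _
  · rw [dif_neg h, dif_neg (mt And.symm h)]
    by_cases hij : i = j
    · simp [hij]
    · simp [hij, Ne.symm hij]

lemma dispR_succ_apply (t : ℕ) (i j : Fin d) (hi : i.val ≠ 0) (hj : j.val ≠ 0) :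
    dispR d S (t + 1) ⟨i.val - 1, by omega⟩ ⟨j.val - 1, by omega⟩ = dispR d S t i j := by
  have shift : ∀ k : Fin d, k.val ≠ 0 → k.val - 1 + (t + 1) = k.val + t := fun k hk => by omega
  have pred_inj : i.val - 1 = j.val - 1 ↔ i.val = j.val := by omega
  simp only [dispR, shift i hi, shift j hj, Fin.ext_iff, pred_inj]

lemma dispR_apply_of_val_eq_zero (hdiag : ∀ k, S k k = 1) (t : ℕ) (i j : Fin d)
    (hi : i.val = 0) : dispR d S t i j = star (dispG d S t j 0) := by
  by_cases hj : j.val = 0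
  · obtain rfl : i = j := Fin.ext (hi.trans hj.symm)
    simp [dispR_apply_self hdiag, dispG, hj]
  · have hij : i ≠ j := fun h => hj (h ▸ hi)
    simp only [dispR, dispG, hi, hj, hij, zero_add, add_comm t j.val, if_false]
    by_cases h : j.val + t < d
    · simp [h, (Nat.le_add_left t j).trans_lt h]
    · simp [h]

lemma dispG_mul_dispJ_mul_conjTranspose_apply (t : ℕ) (i j : Fin d) :
    (dispG d S t * dispJ * (dispG d S t)ᴴ) i j =
      if i.val = 0 then star (dispG d S t j 0) else if j.val = 0 then dispG d S t i 0 else 0 := by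
  have hG0 : ∀ k : Fin d, k.val = 0 → ∀ c, dispG d S t k c = if c = 0 then 1 else 0 :=
    fun k hk c => by simp [dispG, hk]
  have hG1 : ∀ k : Fin d, k.val ≠ 0 → dispG d S t k 1 = dispG d S t k 0 :=
    fun k hk => by simp [dispG, hk]
  simp only [mul_apply, Fin.sum_univ_two, dispJ, conjTranspose_apply, of_apply, cons_val',
    cons_val_zero, cons_val_fin_one, cons_val_one, mul_one, mul_zero, add_zero, zero_add,
    mul_neg, neg_mul]
  split_ifs with hi hj
  · simp [hG0 i hi]
  · simp [hG0 j hj, hG1 i hi]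
  · simp [hG1 i hi, hG1 j hj]

end Displacement

theorem stmt_17_general (d : ℕ) (S : Matrix (Fin d) (Fin d) ℂ)
    (hS : S.IsHermitian) (hdiag : ∀ k, S k k = 1)
    (t : ℕ) :
    dispR d S t - dispF d * dispR d S (t + 1) * (dispF d)ᴴ =
      dispG d S t * dispJ * (dispG d S t)ᴴ := by
  ext i j
  rw [Matrix.sub_apply, dispF_mul_mul_conjTranspose_apply, dispG_mul_dispJ_mul_conjTranspose_apply]
  by_cases hi : i.val = 0
  · simp [hi, dispR_apply_of_val_eq_zero hdiag]
  by_cases hj : j.val = 0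
  · rw [← (hS.dispR t).apply i j]
    simp [hi, hj, dispR_apply_of_val_eq_zero hdiag]
  · simp [hi, hj, dispR_succ_apply]

/-- the displacement-structure equation
`R(−t) − F R(−t−1) F* = G(−t) J G(−t)*` for a Hermitian matrix with unit diagonal. -/
theorem stmt_17 (d : ℕ) (hd : 2 ≤ d) (S : Matrix (Fin d) (Fin d) ℂ)
    (hS : S.IsHermitian) (hdiag : ∀ k, S k k = 1)
    (t : ℕ) (ht : t ≤ d - 2) :
    dispR d S t - dispF d * dispR d S (t + 1) * (dispF d)ᴴ =
      dispG d S t * dispJ * (dispG d S t)ᴴ :=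
  stmt_17_general d S hS hdiag t
end
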